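/- arXiv:1511.01799 — 3 statements merged into one kernel-verified Lean document; each statement's English description precedes it below -/
import Mathlib

section
/- Let f : ℂ → ℂ be a transcendental entire function. Suppose that for every sequence (a_n) of positive reals with a_n → ∞ for which there exists λ > 0 with a_{n+1} ≤ λ·M(a_n, f) for all n ≥ 1, there exist ζ ∈ ℂ and C > 1 such that a_n ≤ |f^n(ζ)| ≤ C·a_n for all n ≥ 1. Then there exist constants L' > 1 and s ∈ (0,1) and a sequence (x'_n) of points of ℂ with |x'_n| → ∞ such that, for all n ≥ 1, |x'_{n+1}| ≤ L'·|x'_n| and |f(x'_n)| ≤ M(|x'_n|, f)^s. -/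
/-!
Cauchy's estimates show that a transcendental entire function satisfies `M(r, f) ≥ c r ^ N`
for `r ≥ 1`, for every `N`. With `N = 1` the sequence `aₙ = n` is admissible, so the hypothesis
yields an orbit `zₙ = fⁿ(ζ)` with `n ≤ |zₙ| ≤ C n`. Then `|f(zₙ)| = |zₙ₊₁| ≤ 2C |zₙ|`, and with
`N = 3` this is at most `M(|zₙ|, f) ^ (1/2)` as soon as `c n ≥ 4 C²`; a tail of the orbit works
with `L' = 2C` and `s = 1/2`.
-/

open Filter Topology

/-- The maximum modulus of `f` on the circle of radius `r` about the origin. -/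
noncomputable def maxMod (f : ℂ → ℂ) (r : ℝ) : ℝ :=
  sSup ((fun z => ‖f z‖) '' Metric.sphere (0 : ℂ) r)

lemma norm_le_maxMod_of_mem_sphere {f : ℂ → ℂ} (hf : Continuous f) {r : ℝ} {z : ℂ}
    (hz : z ∈ Metric.sphere (0 : ℂ) r) : ‖f z‖ ≤ maxMod f r :=
  le_csSup ((isCompact_sphere 0 r).image (continuous_norm.comp hf)).bddAbove ⟨z, hz, rfl⟩

lemma norm_iteratedDeriv_div_factorial_mul_pow_le_maxMod {f : ℂ → ℂ} (hf : Differentiable ℂ f)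
    (m : ℕ) {R : ℝ} (hR : 0 < R) :
    ‖iteratedDeriv m f 0‖ / m.factorial * R ^ m ≤ maxMod f R := by
  have hcauchy := Complex.norm_iteratedDeriv_le_of_forall_mem_sphere_norm_le m hR
    hf.diffContOnCl fun z hz => norm_le_maxMod_of_mem_sphere hf.continuous hz
  rw [div_mul_eq_mul_div, div_le_iff₀ (by positivity)]
  rw [le_div_iff₀ (by positivity)] at hcauchy
  linarith [mul_comm (R ^ m) ‖iteratedDeriv m f 0‖, mul_comm (m.factorial : ℝ) (maxMod f R)]

lemma exists_ge_iteratedDeriv_ne_zero {f : ℂ → ℂ} (hf : Differentiable ℂ f)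
    (htrans : ¬ ∃ p : Polynomial ℂ, ∀ z, f z = p.eval z) (N : ℕ) :
    ∃ m ≥ N, iteratedDeriv m f 0 ≠ 0 := by
  by_contra! hvanish
  refine htrans ⟨∑ n ∈ Finset.range N,
    Polynomial.C ((n.factorial : ℂ)⁻¹ * iteratedDeriv n f 0) * Polynomial.X ^ n, fun z => ?_⟩
  have htaylor := Complex.hasSum_taylorSeries_of_entire hf 0 z
  have htrunc : HasSum (fun n => (n.factorial : ℂ)⁻¹ • (z - 0) ^ n • iteratedDeriv n f 0)
      (∑ n ∈ Finset.range N, (n.factorial : ℂ)⁻¹ • (z - 0) ^ n • iteratedDeriv n f 0) :=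
    hasSum_sum_of_ne_finset_zero fun n hn => by
      simp [hvanish n (by simpa using hn)]
  rw [htaylor.unique htrunc]
  simp [Polynomial.eval_finsetSum, mul_comm, mul_left_comm]

lemma exists_pos_mul_pow_le_maxMod {f : ℂ → ℂ} (hf : Differentiable ℂ f)
    (htrans : ¬ ∃ p : Polynomial ℂ, ∀ z, f z = p.eval z) (N : ℕ) :
    ∃ c > (0 : ℝ), ∀ R ≥ (1 : ℝ), c * R ^ N ≤ maxMod f R := by
  obtain ⟨m, hmN, hm⟩ := exists_ge_iteratedDeriv_ne_zero hf htrans N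
  refine ⟨‖iteratedDeriv m f 0‖ / m.factorial, by positivity, fun R hR => ?_⟩
  calc ‖iteratedDeriv m f 0‖ / m.factorial * R ^ N
      ≤ ‖iteratedDeriv m f 0‖ / m.factorial * R ^ m := by gcongr
    _ ≤ maxMod f R := norm_iteratedDeriv_div_factorial_mul_pow_le_maxMod hf m (by linarith)

lemma natCast_add_one_le_mul_maxMod {f : ℂ → ℂ} {c : ℝ} (hc : 0 < c)
    (hgrow : ∀ R ≥ (1 : ℝ), c * R ^ 1 ≤ maxMod f R) {n : ℕ} (hn : 1 ≤ n) :
    ((n + 1 : ℕ) : ℝ) ≤ 2 / c * maxMod f n := by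
  have hn' : (1 : ℝ) ≤ n := by exact_mod_cast hn
  calc ((n + 1 : ℕ) : ℝ) ≤ 2 / c * (c * (n : ℝ) ^ 1) := by
        push_cast; field_simp; linarith
    _ ≤ 2 / c * maxMod f n := by gcongr; exact hgrow _ hn'

lemma orbit_step_bounds {f : ℂ → ℂ} {z : ℕ → ℂ} {c C : ℝ} (hC : 0 ≤ C)
    (hgrow : ∀ R ≥ (1 : ℝ), c * R ^ 3 ≤ maxMod f R)
    (horb : ∀ n : ℕ, n ≥ 1 → (n : ℝ) ≤ ‖z n‖ ∧ ‖z n‖ ≤ C * n) {j : ℕ} (hj : 1 ≤ j)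
    (hjC : 4 * C ^ 2 ≤ c * j) :
    ‖z (j + 1)‖ ≤ 2 * C * ‖z j‖ ∧ ‖z (j + 1)‖ ≤ maxMod f ‖z j‖ ^ (1 / 2 : ℝ) := by
  have hj' : (1 : ℝ) ≤ j := by exact_mod_cast hj
  have hlow : (j : ℝ) ≤ ‖z j‖ := (horb j hj).1
  have hstep : ‖z (j + 1)‖ ≤ 2 * C * ‖z j‖ :=
    calc ‖z (j + 1)‖ ≤ C * ((j + 1 : ℕ) : ℝ) := (horb (j + 1) (by omega)).2
      _ ≤ 2 * C * j := by push_cast; nlinarith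
      _ ≤ 2 * C * ‖z j‖ := by gcongr
  refine ⟨hstep, ?_⟩
  have hcubic : (2 * C * ‖z j‖) ^ 2 ≤ maxMod f ‖z j‖ :=
    calc (2 * C * ‖z j‖) ^ 2 = 4 * C ^ 2 * ‖z j‖ ^ 2 := by ring
      _ ≤ c * ‖z j‖ * ‖z j‖ ^ 2 := by
          have hc : 0 ≤ c := by nlinarith
          gcongr ?_ * _; nlinarith
      _ = c * ‖z j‖ ^ 3 := by ring
      _ ≤ maxMod f ‖z j‖ := hgrow _ (hj'.trans hlow)
  rw [← Real.sqrt_eq_rpow]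
  exact hstep.trans (Real.le_sqrt_of_sq_le hcubic)

theorem slow_escape_a_implies_c
    (f : ℂ → ℂ) (hf : Differentiable ℂ f)
    (htrans : ¬ ∃ p : Polynomial ℂ, ∀ z, f z = p.eval z)
    (ha : ∀ a : ℕ → ℝ, (∀ n ≥ 1, 0 < a n) → Tendsto a atTop atTop →
      (∃ lam > (0 : ℝ), ∀ n ≥ 1, a (n + 1) ≤ lam * maxMod f (a n)) →
      ∃ (ζ : ℂ) (C : ℝ), 1 < C ∧
        ∀ n ≥ 1, a n ≤ ‖f^[n] ζ‖ ∧ ‖f^[n] ζ‖ ≤ C * a n) :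
    ∃ L' > (1 : ℝ), ∃ s : ℝ, 0 < s ∧ s < 1 ∧ ∃ x' : ℕ → ℂ,
      Tendsto (fun n => ‖x' n‖) atTop atTop ∧
      ∀ n ≥ 1, ‖x' (n + 1)‖ ≤ L' * ‖x' n‖ ∧
        ‖f (x' n)‖ ≤ maxMod f (‖x' n‖) ^ s := by
  obtain ⟨c₁, hc₁, hlinear⟩ := exists_pos_mul_pow_le_maxMod hf htrans 1
  obtain ⟨c, hc, hcubic⟩ := exists_pos_mul_pow_le_maxMod hf htrans 3
  obtain ⟨ζ, C, hC, horb⟩ := ha (fun n => n) (fun n hn => by positivity)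
    tendsto_natCast_atTop_atTop
    ⟨2 / c₁, by positivity, fun n hn => natCast_add_one_le_mul_maxMod hc₁ hlinear hn⟩
  obtain ⟨k, hk⟩ := exists_nat_ge (4 * C ^ 2 / c)
  refine ⟨2 * C, by linarith, 1 / 2, by norm_num, by norm_num, fun n => f^[n + k] ζ, ?_,
    fun n hn => ?_⟩ <;> beta_reduce
  · refine tendsto_atTop_mono' _ ?_ tendsto_natCast_atTop_atTop
    filter_upwards [eventually_ge_atTop 1] with n hn
    exact (Nat.cast_le.2 (Nat.le_add_right n k)).trans (horb (n + k) (by omega)).1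
  · have hjC : 4 * C ^ 2 ≤ c * ((n + k : ℕ) : ℝ) := by
      rw [div_le_iff₀ hc] at hk; push_cast; nlinarith
    rw [show n + 1 + k = n + k + 1 by omega, ← Function.iterate_succ_apply' f]
    exact orbit_step_bounds (by linarith) hcubic horb (by omega) hjC
end

section
/- Let d ≥ 1, let f : ℝ^d → ℝ^d be a continuous function, and let (E_n)_{n ≥ 0} be a sequence of non-empty bounded subsets of ℝ^d such that f(E_n) ⊇ E_{n+1} for every n ≥ 0. Then there exists a point ζ ∈ ℝ^d such that f^n(ζ) lies in the closure of E_n for every n ≥ 0. -/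
open Filter Topology

theorem orbit_through_covered_sets
    (d : ℕ) (hd : 1 ≤ d)
    (f : EuclideanSpace ℝ (Fin d) → EuclideanSpace ℝ (Fin d)) (hf : Continuous f)
    (E : ℕ → Set (EuclideanSpace ℝ (Fin d)))
    (hne : ∀ n, (E n).Nonempty)
    (hbdd : ∀ n, Bornology.IsBounded (E n))
    (hcov : ∀ n, E (n + 1) ⊆ f '' E n) :
    ∃ ζ : EuclideanSpace ℝ (Fin d), ∀ n, f^[n] ζ ∈ closure (E n) := by
  -- pull back chains
  have chain : ∀ n, ∀ y ∈ E n, ∃ x, f^[n] x = y ∧ ∀ k ≤ n, f^[k] x ∈ E k := by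
    intro n
    induction n with
    | zero => intro y hy; exact ⟨y, rfl, fun k hk => by simpa [Nat.le_zero.mp hk] using hy⟩
    | succ n ih =>
      intro y hy
      obtain ⟨z, hz, hfz⟩ := hcov n hy
      obtain ⟨x, hx, hxk⟩ := ih z hz
      refine ⟨x, ?_, ?_⟩
      · rw [Function.iterate_succ_apply', hx, hfz]
      · intro k hk
        rcases Nat.lt_succ_iff_lt_or_eq.mp (Nat.lt_succ_of_le hk) with h | h
        · exact hxk k (Nat.lt_succ_iff.mp h)
        · subst h
          rw [Function.iterate_succ_apply', hx, hfz]; exact hy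
  set C : ℕ → Set (EuclideanSpace ℝ (Fin d)) :=
    fun n => {x | ∀ k ≤ n, f^[k] x ∈ closure (E k)} with hC
  have hmono : ∀ n, C (n + 1) ⊆ C n := fun n x hx k hk => hx k (hk.trans (Nat.le_succ n))
  have hCne : ∀ n, (C n).Nonempty := by
    intro n
    obtain ⟨y, hy⟩ := hne n
    obtain ⟨x, _, hxk⟩ := chain n y hy
    exact ⟨x, fun k hk => subset_closure (hxk k hk)⟩
  have hclosed : ∀ n, IsClosed (C n) := by
    intro n
    have : C n = ⋂ k ∈ Set.Iic n, (f^[k]) ⁻¹' closure (E k) := by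
      ext x; simp [hC, Set.mem_iInter]
    rw [this]
    exact isClosed_biInter fun k _ => (isClosed_closure).preimage (hf.iterate k)
  have hcomp : IsCompact (C 0) := by
    have hsub : C 0 ⊆ closure (E 0) := fun x hx => by simpa using hx 0 le_rfl
    have : IsCompact (closure (E 0)) := (hbdd 0).isCompact_closure
    exact this.of_isClosed_subset (hclosed 0) hsub
  obtain ⟨ζ, hζ⟩ := IsCompact.nonempty_iInter_of_sequence_nonempty_isCompact_isClosed
    C hmono hCne hcomp hclosed
  exact ⟨ζ, fun n => (Set.mem_iInter.mp hζ n) n le_rfl⟩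
end

section
/- Let d ≥ 1, let f : ℝ^d → ℝ^d be continuous, let p ≥ 1 be an integer, and for each ν ≥ 1 and j ∈ {1,…,p} let A_ν^{(j)} be a non-empty bounded subset of ℝ^d. Write A_ν = A_ν^{(1)} ∪ … ∪ A_ν^{(p)}. Assume: (Ha) inf{|x| : x ∈ A_ν} → ∞ as ν → ∞; (Hb) for each ν ≥ 1 and each j ∈ {1,…,p} there exists i ∈ {1,…,p} with f(A_ν^{(j)}) ⊇ A_{ν+1}^{(i)}; (Hc) there is a strictly increasing sequence of positive integers (ν_k) such that for each k and each j ∈ {1,…,p} there exists i ∈ {1,…,p} with f(A_{ν_k}^{(j)}) ⊇ A_{ν_k}^{(i)}. Then for every sequence (a_n)_{n ≥ 1} of positive reals with a_n → ∞, there exist ζ ∈ ℝ^d and N₁ ∈ ℕ such that |f^n(ζ)| → ∞ as n → ∞ and |f^n(ζ)| ≤ a_{n + N₁} for all n ≥ 0. -/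
open Filter Topology

/-!
The orbit follows a level schedule `m`: from a set of level `μ` it moves to one of level `μ + 1`
(by (Hb)), except that at level `ν k` it may stay put (by (Hc)), which it does until time `T k`,
when `a` has outgrown all the sets of levels between `ν k` and `ν (k + 1)`. Closures of the
chosen sets are compact with `Cₙ₊₁ ⊆ f(Cₙ)`, so a nested intersection argument gives `ζ` with
`fⁿ(ζ) ∈ Cₙ` for all `n`. Then `|fⁿ(ζ)|` tends to infinity by (Ha), since `m n` does, and the
waiting keeps it below `a`.
-/

theorem Bornology.IsBounded.eventually_forall_norm_le {E ι : Type*} [SeminormedAddCommGroup E]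
    {S : Set E} (hS : Bornology.IsBounded S) {a : ι → ℝ} {l : Filter ι}
    (ha : Tendsto a l atTop) : ∀ᶠ i in l, ∀ x ∈ S, ‖x‖ ≤ a i := by
  obtain ⟨R, hR⟩ := hS.exists_norm_le
  filter_upwards [ha.eventually_ge_atTop R] with i hi x hx using (hR x hx).trans hi

section Orbit

variable {X : Type*} {f : X → X}

theorem exists_seq_subset_image_of_forall_exists {ι : Type*} [Nonempty ι] {B : ℕ → ι → Set X}
    (h : ∀ n j, ∃ i, B (n + 1) i ⊆ f '' B n j) :
    ∃ s : ℕ → ι, ∀ n, B (n + 1) (s (n + 1)) ⊆ f '' B n (s n) := by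
  choose g hg using h
  exact ⟨fun n => Nat.rec (Classical.arbitrary ι) g n, fun n => hg n _⟩

theorem exists_iterate_mem_of_subset_image {K : ℕ → Set X}
    (hKf : ∀ n, K (n + 1) ⊆ f '' K n) (n : ℕ) :
    ∀ y ∈ K n, ∃ x, f^[n] x = y ∧ ∀ i ≤ n, f^[i] x ∈ K i := by
  induction n with
  | zero => exact fun y hy => ⟨y, rfl, fun i hi => by simpa [Nat.le_zero.1 hi] using hy⟩
  | succ n ih =>
    intro y hy
    obtain ⟨z, hz, rfl⟩ := hKf n hy
    obtain ⟨x, rfl, hx⟩ := ih z hz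
    refine ⟨x, Function.iterate_succ_apply' .., fun i hi => ?_⟩
    rcases Nat.of_le_succ hi with hi | rfl
    · exact hx i hi
    · rwa [Function.iterate_succ_apply']

variable [TopologicalSpace X]

theorem exists_forall_iterate_mem_of_isCompact [T2Space X] (hf : Continuous f) {K : ℕ → Set X}
    (hK : ∀ n, IsCompact (K n)) (hne : ∀ n, (K n).Nonempty) (hKf : ∀ n, K (n + 1) ⊆ f '' K n) :
    ∃ ζ, ∀ n, f^[n] ζ ∈ K n := by
  set D : ℕ → Set X := fun n => ⋂ i ∈ Set.Iic n, f^[i] ⁻¹' K i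
  have hD_closed n : IsClosed (D n) :=
    isClosed_biInter fun i _ => (hK i).isClosed.preimage (hf.iterate i)
  have hD_ne n : (D n).Nonempty := by
    obtain ⟨x, -, hx⟩ := exists_iterate_mem_of_subset_image hKf n _ (hne n).some_mem
    exact ⟨x, Set.mem_iInter₂.2 hx⟩
  have hD_anti n : D (n + 1) ⊆ D n :=
    Set.biInter_subset_biInter_left (Set.Iic_subset_Iic.2 n.le_succ)
  have hD_compact : IsCompact (D 0) :=
    (hK 0).of_isClosed_subset (hD_closed 0) fun x hx => Set.mem_iInter₂.1 hx 0 Set.self_mem_Iic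
  obtain ⟨ζ, hζ⟩ := IsCompact.nonempty_iInter_of_sequence_nonempty_isCompact_isClosed D
    hD_anti hD_ne hD_compact hD_closed
  exact ⟨ζ, fun n => Set.mem_iInter₂.1 (Set.mem_iInter.1 hζ n) n Set.self_mem_Iic⟩

theorem exists_forall_iterate_mem_closure [T2Space X] (hf : Continuous f) {S : ℕ → Set X}
    (hS : ∀ n, IsCompact (closure (S n))) (hne : ∀ n, (S n).Nonempty)
    (hSf : ∀ n, S (n + 1) ⊆ f '' S n) :
    ∃ ζ, ∀ n, f^[n] ζ ∈ closure (S n) :=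
  exists_forall_iterate_mem_of_isCompact hf hS (fun n => (hne n).closure) fun n =>
    closure_minimal ((hSf n).trans (Set.image_mono subset_closure)) ((hS n).image hf).isClosed

end Orbit

section LevelSchedule

open Classical in
noncomputable def levelSchedule (ν T : ℕ → ℕ) : ℕ → ℕ
  | 0 => ν 0
  | n + 1 =>
    if ∃ k, levelSchedule ν T n = ν k ∧ n < T k then levelSchedule ν T n
    else levelSchedule ν T n + 1

variable (ν T : ℕ → ℕ)

theorem levelSchedule_succ_eq_or (n : ℕ) :
    levelSchedule ν T (n + 1) = levelSchedule ν T n + 1 ∨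
      levelSchedule ν T (n + 1) = levelSchedule ν T n ∧ ∃ k, levelSchedule ν T n = ν k := by
  rw [levelSchedule]
  split_ifs with h
  · exact Or.inr ⟨rfl, h.imp fun _ => And.left⟩
  · exact Or.inl rfl

theorem monotone_levelSchedule : Monotone (levelSchedule ν T) :=
  monotone_nat_of_le_succ fun n => by
    rcases levelSchedule_succ_eq_or ν T n with h | ⟨h, -⟩ <;> omega

theorem levelSchedule_succ_of_le (hν : ν.Injective) {n k : ℕ} (hk : T k ≤ n)
    (h : levelSchedule ν T n = ν k) : levelSchedule ν T (n + 1) = levelSchedule ν T n + 1 := by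
  rw [levelSchedule, if_neg]
  rintro ⟨k', hk', hn⟩
  rw [h, hν.eq_iff] at hk'
  subst hk'
  omega

theorem exists_lt_levelSchedule (hν : ν.Injective) (n : ℕ) :
    ∃ n', levelSchedule ν T n < levelSchedule ν T n' := by
  by_cases hlevel : ∃ k, levelSchedule ν T n = ν k
  · obtain ⟨k, hk⟩ := hlevel
    refine ⟨n + T k + 1, ?_⟩
    have hmono := monotone_levelSchedule ν T (n.le_add_right (T k))
    rcases hmono.lt_or_eq with hlt | heq
    · exact hlt.trans_le (monotone_levelSchedule ν T (Nat.le_succ _))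
    · rw [levelSchedule_succ_of_le ν T hν (Nat.le_add_left _ _) (heq ▸ hk), ← heq]
      exact Nat.lt_succ_self _
  · refine ⟨n + 1, ?_⟩
    rcases levelSchedule_succ_eq_or ν T n with h | ⟨-, hk⟩
    · omega
    · exact absurd hk hlevel

theorem tendsto_levelSchedule (hν : ν.Injective) : Tendsto (levelSchedule ν T) atTop atTop := by
  refine (monotone_levelSchedule ν T).tendsto_atTop_atTop fun b => ?_
  induction b with
  | zero => exact ⟨0, Nat.zero_le _⟩
  | succ b ih =>
    obtain ⟨n, hn⟩ := ih
    obtain ⟨n', hn'⟩ := exists_lt_levelSchedule ν T hν n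
    exact ⟨n', by omega⟩

theorem exists_levelSchedule_mem_Icc (hν : StrictMono ν) (n : ℕ) :
    ∃ k, levelSchedule ν T n ∈ Set.Icc (ν k) (ν (k + 1)) ∧ T k ≤ n + T 0 := by
  induction n with
  | zero => exact ⟨0, ⟨le_rfl, hν.monotone (Nat.zero_le 1)⟩, by omega⟩
  | succ n ih =>
    obtain ⟨k, ⟨hk₁, hk₂⟩, hTk⟩ := ih
    rw [levelSchedule]
    split_ifs with hwait
    · exact ⟨k, ⟨hk₁, hk₂⟩, by omega⟩
    · simp only [not_exists, not_and, not_lt] at hwait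
      rcases hk₂.lt_or_eq with hlt | heq
      · exact ⟨k, ⟨by omega, hlt⟩, by omega⟩
      · have := hν (Nat.lt_add_one (k + 1))
        exact ⟨k + 1, ⟨by omega, by omega⟩, by have := hwait _ heq; omega⟩

end LevelSchedule

theorem holding_up_lemma_general
    (d : ℕ)
    (f : EuclideanSpace ℝ (Fin d) → EuclideanSpace ℝ (Fin d)) (hf : Continuous f)
    (p : ℕ) (hp : 1 ≤ p)
    (A : ℕ → Fin p → Set (EuclideanSpace ℝ (Fin d)))
    (hne : ∀ ν ≥ 1, ∀ j, (A ν j).Nonempty)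
    (hbdd : ∀ ν ≥ 1, ∀ j, Bornology.IsBounded (A ν j))
    (Ha : Tendsto (fun ν => sInf ((fun x => ‖x‖) '' ⋃ j, A ν j)) atTop atTop)
    (Hb : ∀ ν ≥ 1, ∀ j, ∃ i, A (ν + 1) i ⊆ f '' A ν j)
    (ν : ℕ → ℕ) (hν₁ : ∀ k, 1 ≤ ν k) (hνmono : StrictMono ν)
    (Hc : ∀ k, ∀ j, ∃ i, A (ν k) i ⊆ f '' A (ν k) j) :
    ∀ a : ℕ → ℝ, (∀ n ≥ 1, 0 < a n) → Tendsto a atTop atTop →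
      ∃ (ζ : EuclideanSpace ℝ (Fin d)) (N₁ : ℕ),
        Tendsto (fun n => ‖f^[n] ζ‖) atTop atTop ∧
        ∀ n, ‖f^[n] ζ‖ ≤ a (n + N₁) := by
  intro a _ ha
  have hblock k : Bornology.IsBounded (⋃ μ ∈ Finset.Icc (ν k) (ν (k + 1)), ⋃ j, A μ j) :=
    (Bornology.isBounded_biUnion_finset _).2 fun μ hμ => Bornology.isBounded_iUnion.2
      (hbdd μ ((hν₁ k).trans (Finset.mem_Icc.1 hμ).1))
  choose T hT using fun k => ((hblock k).eventually_forall_norm_le ha).exists_forall_of_atTop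
  set m := levelSchedule ν T
  have hm₁ n : 1 ≤ m n := (hν₁ 0).trans (monotone_levelSchedule ν T n.zero_le)
  have : Nonempty (Fin p) := ⟨⟨0, hp⟩⟩
  obtain ⟨s, hs⟩ := exists_seq_subset_image_of_forall_exists (f := f) (B := fun n => A (m n))
    fun n j => by
      rcases levelSchedule_succ_eq_or ν T n with h | ⟨h, k, hk⟩
      · rw [show m (n + 1) = m n + 1 from h]; exact Hb _ (hm₁ n) j
      · rw [show m (n + 1) = ν k from h.trans hk, show m n = ν k from hk]; exact Hc k j
  obtain ⟨ζ, hζ⟩ := exists_forall_iterate_mem_closure hf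
    (fun n => (hbdd _ (hm₁ n) _).isCompact_closure) (fun n => hne _ (hm₁ n) _) hs
  have hlower n : sInf ((fun x => ‖x‖) '' ⋃ j, A (m n) j) ≤ ‖f^[n] ζ‖ := by
    have hbdd_below : BddBelow ((fun x => ‖x‖) '' ⋃ j, A (m n) j) :=
      ⟨0, by rintro _ ⟨x, -, rfl⟩; exact norm_nonneg x⟩
    exact closure_minimal (fun x hx => csInf_le hbdd_below ⟨x, Set.mem_iUnion.2 ⟨s n, hx⟩, rfl⟩)
      (isClosed_le continuous_const continuous_norm) (hζ n)
  have hupper n : ‖f^[n] ζ‖ ≤ a (n + T 0) := by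
    obtain ⟨k, hk, hTk⟩ := exists_levelSchedule_mem_Icc ν T hνmono n
    refine closure_minimal (fun x hx => hT k _ hTk x ?_)
      (isClosed_le continuous_norm continuous_const) (hζ n)
    exact Set.mem_biUnion (Finset.mem_Icc.2 hk) (Set.mem_iUnion.2 ⟨s n, hx⟩)
  exact ⟨ζ, T 0,
    tendsto_atTop_mono hlower (Ha.comp (tendsto_levelSchedule ν T hνmono.injective)), hupper⟩

theorem holding_up_lemma
    (d : ℕ) (hd : 1 ≤ d)
    (f : EuclideanSpace ℝ (Fin d) → EuclideanSpace ℝ (Fin d)) (hf : Continuous f)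
    (p : ℕ) (hp : 1 ≤ p)
    (A : ℕ → Fin p → Set (EuclideanSpace ℝ (Fin d)))
    (hne : ∀ ν ≥ 1, ∀ j, (A ν j).Nonempty)
    (hbdd : ∀ ν ≥ 1, ∀ j, Bornology.IsBounded (A ν j))
    (Ha : Tendsto (fun ν => sInf ((fun x => ‖x‖) '' ⋃ j, A ν j)) atTop atTop)
    (Hb : ∀ ν ≥ 1, ∀ j, ∃ i, A (ν + 1) i ⊆ f '' A ν j)
    (ν : ℕ → ℕ) (hν₁ : ∀ k, 1 ≤ ν k) (hνmono : StrictMono ν)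
    (Hc : ∀ k, ∀ j, ∃ i, A (ν k) i ⊆ f '' A (ν k) j) :
    ∀ a : ℕ → ℝ, (∀ n ≥ 1, 0 < a n) → Tendsto a atTop atTop →
      ∃ (ζ : EuclideanSpace ℝ (Fin d)) (N₁ : ℕ),
        Tendsto (fun n => ‖f^[n] ζ‖) atTop atTop ∧
        ∀ n, ‖f^[n] ζ‖ ≤ a (n + N₁) :=
  holding_up_lemma_general d f hf p hp A hne hbdd Ha Hb ν hν₁ hνmono Hc
end
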